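/- arXiv:0903.3694 — 2 statements merged into one kernel-verified Lean document; each statement's English description precedes it below -/
import Mathlib

section
/- Let I, K ∈ binom([n],k) and let s ≥ 0 be an integer. Then dist(K, B(I)) ≤ s if and only if |I ∩ {1,…,r−1}| − |K ∩ {1,…,r−1}| ≤ s for every r ∈ {1,…,n+1}. -/
/-- The Gale order on k-element subsets of Fin n: I ≤ J iff, listing both
increasingly, the r-th element of I is at most the r-th element of J. -/
def galeLE (n k : ℕ) (I J : Finset (Fin n)) : Prop :=
  ∃ (hI : I.card = k) (hJ : J.card = k),
    ∀ r : Fin k, ((I.orderIsoOfFin hI r : Fin n)) ≤ ((J.orderIsoOfFin hJ r : Fin n))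

/-- dist(K,L) = k − |K ∩ L| for two k-element subsets. -/
def distKL {n : ℕ} (k : ℕ) (K L : Finset (Fin n)) : ℕ := k - (K ∩ L).card

/-- The distance from K to a set ℬ of k-element subsets:
min_{L ∈ ℬ} dist(K,L). -/
noncomputable def distToSet {n : ℕ} (k : ℕ) (K : Finset (Fin n))
    (ℬ : Set (Finset (Fin n))) : ℕ :=
  sInf (distKL k K '' ℬ)

/-!
Writing `countLT A r` for the number of elements of `A` below `r`, the Gale relation `L ≤ I` says
exactly that `countLT I r ≤ countLT L r` for all `r`, and `dist(K, L) = |L \ K|`. Since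
`countLT L r ≤ countLT K r + |L \ K|`, the condition is necessary. Conversely, if it holds with
`s + 1` but fails with `s`, every `r` where `I` is ahead of `K` lies strictly above the least
element `a ∉ K` and at most the greatest element `b ∈ K`; replacing `b` by `a` in `K` lowers the
excess `countLT I r - countLT K r` by one wherever it is positive, never raises it, and changes
`|L \ K|` by at most one, so induction on `s` finishes the proof.
-/

open Finset

section

variable {n k : ℕ}

def countLT (A : Finset (Fin n)) (r : ℕ) : ℕ := #(A.filter fun m : Fin n => (m : ℕ) < r)

lemma countLT_le_card (A : Finset (Fin n)) (r : ℕ) : countLT A r ≤ #A :=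
  card_filter_le _ _

lemma countLT_of_le (A : Finset (Fin n)) {r : ℕ} (h : n ≤ r) : countLT A r = #A :=
  congrArg card (filter_true_of_mem fun m _ => m.isLt.trans_le h)

lemma countLT_insert {A : Finset (Fin n)} {a : Fin n} (ha : a ∉ A) (r : ℕ) :
    countLT (insert a A) r = countLT A r + if (a : ℕ) < r then 1 else 0 := by
  unfold countLT
  rw [filter_insert]
  split_ifs with h
  · exact card_insert_of_notMem (fun h' => ha (mem_filter.1 h').1)
  · rfl

lemma countLT_erase_add {A : Finset (Fin n)} {b : Fin n} (hb : b ∈ A) (r : ℕ) :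
    countLT (A.erase b) r + (if (b : ℕ) < r then 1 else 0) = countLT A r := by
  unfold countLT
  rw [filter_erase]
  split_ifs with h
  · exact card_erase_add_one (mem_filter.2 ⟨hb, h⟩)
  · have hb' : b ∉ A.filter fun m : Fin n => (m : ℕ) < r := fun h' => h (mem_filter.1 h').2
    rw [erase_eq_of_notMem hb', add_zero]

lemma countLT_le_countLT_add_card_sdiff (K L : Finset (Fin n)) (r : ℕ) :
    countLT L r ≤ countLT K r + #(L \ K) :=
  calc countLT L r ≤ #((K.filter fun m : Fin n => (m : ℕ) < r) ∪ (L \ K)) := by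
        refine card_le_card fun m hm => ?_
        rw [mem_filter] at hm
        by_cases hmK : m ∈ K
        · exact mem_union_left _ (mem_filter.2 ⟨hmK, hm.2⟩)
        · exact mem_union_right _ (mem_sdiff.2 ⟨hm.1, hmK⟩)
    _ ≤ countLT K r + #(L \ K) := card_union_le _ _

lemma countLT_eq_card_filter_orderEmbOfFin (A : Finset (Fin n)) (hA : #A = k) (r : ℕ) :
    countLT A r = #(univ.filter fun j : Fin k => (A.orderEmbOfFin hA j : ℕ) < r) := by
  conv_lhs => rw [countLT, ← A.map_orderEmbOfFin_univ hA]
  rw [filter_map, card_map]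
  rfl

lemma lt_countLT_iff (A : Finset (Fin n)) (hA : #A = k) (j : Fin k) (r : ℕ) :
    (j : ℕ) < countLT A r ↔ (A.orderEmbOfFin hA j : ℕ) < r := by
  rw [countLT_eq_card_filter_orderEmbOfFin A hA]
  constructor
  · intro hj
    by_contra! hr
    have : (univ.filter fun j' : Fin k => (A.orderEmbOfFin hA j' : ℕ) < r) ⊆ Iio j :=
      fun j' hj' => mem_Iio.2 <| (A.orderEmbOfFin hA).lt_iff_lt.1 <|
        Fin.lt_def.2 ((mem_filter.1 hj').2.trans_le hr)
    exact (card_le_card this).not_gt (by rwa [Fin.card_Iio])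
  · intro hj
    have : Iic j ⊆ (univ.filter fun j' : Fin k => (A.orderEmbOfFin hA j' : ℕ) < r) :=
      fun j' hj' => mem_filter.2 ⟨mem_univ _,
        (Fin.le_def.1 ((A.orderEmbOfFin hA).monotone (mem_Iic.1 hj'))).trans_lt hj⟩
    simpa [Fin.card_Iic] using card_le_card this

lemma galeLE_iff_countLT {I L : Finset (Fin n)} (hI : #I = k) :
    galeLE n k L I ↔ #L = k ∧ ∀ r, countLT I r ≤ countLT L r := by
  constructor
  · rintro ⟨hL, _, hLI⟩
    refine ⟨hL, fun r => ?_⟩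
    by_contra! hlt
    have hj : countLT L r < k := hlt.trans_le (hI ▸ countLT_le_card I r)
    have hIj := (lt_countLT_iff I hI ⟨_, hj⟩ r).1 hlt
    exact lt_irrefl _ <| (lt_countLT_iff L hL ⟨_, hj⟩ r).2 <|
      (Fin.le_def.1 (hLI ⟨_, hj⟩)).trans_lt hIj
  · rintro ⟨hL, hLI⟩
    refine ⟨hL, hI, fun j => Fin.le_def.2 (Nat.lt_succ_iff.1 ?_)⟩
    rw [coe_orderIsoOfFin_apply, ← lt_countLT_iff L hL]
    exact ((lt_countLT_iff I hI j _).2 (Nat.lt_succ_self _)).trans_le (hLI _)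

lemma distKL_eq_card_sdiff {K L : Finset (Fin n)} (hL : #L = k) : distKL k K L = #(L \ K) := by
  rw [distKL, card_sdiff, hL]

lemma distToSet_le_iff {K : Finset (Fin n)} {ℬ : Set (Finset (Fin n))} (hℬ : ℬ.Nonempty)
    {s : ℕ} : distToSet k K ℬ ≤ s ↔ ∃ L ∈ ℬ, distKL k K L ≤ s := by
  constructor
  · intro h
    obtain ⟨L, hL, hd⟩ := Nat.sInf_mem (hℬ.image (distKL k K))
    exact ⟨L, hL, hd ▸ h⟩
  · rintro ⟨L, hL, hd⟩
    exact (Nat.sInf_le (Set.mem_image_of_mem _ hL)).trans hd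

lemma exists_exchange_of_countLT_lt {I K : Finset (Fin n)} (hIK : #I ≤ #K) {r₀ : ℕ}
    (h₀ : countLT K r₀ < countLT I r₀) :
    ∃ a ∉ K, ∃ b ∈ K, ∀ r, countLT K r < countLT I r → (a : ℕ) < r ∧ r ≤ b := by
  have below : ∀ r, countLT K r < countLT I r → ∃ a ∉ K, (a : ℕ) < r := by
    intro r hr
    by_contra! h
    refine hr.not_ge (card_le_card fun m hm => ?_)
    rw [mem_filter] at hm ⊢
    exact ⟨by_contra fun hmK => (h m hmK).not_gt hm.2, hm.2⟩
  have above : ∀ r, countLT K r < countLT I r → ∃ b ∈ K, r ≤ (b : ℕ) := by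
    intro r hr
    by_contra! h
    have hKr : countLT K r = #K := congrArg card (filter_true_of_mem h)
    exact hr.not_ge (hKr ▸ (countLT_le_card I r).trans hIK)
  obtain ⟨a₀, ha₀, -⟩ := below r₀ h₀
  obtain ⟨b₀, hb₀, -⟩ := above r₀ h₀
  have hKc : Kᶜ.Nonempty := ⟨a₀, mem_compl.2 ha₀⟩
  have hK : K.Nonempty := ⟨b₀, hb₀⟩
  refine ⟨Kᶜ.min' hKc, mem_compl.1 (Kᶜ.min'_mem hKc), K.max' hK, K.max'_mem hK,
    fun r hr => ?_⟩
  obtain ⟨a, ha, har⟩ := below r hr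
  obtain ⟨b, hb, hbr⟩ := above r hr
  exact ⟨(Fin.le_def.1 (Kᶜ.min'_le a (mem_compl.2 ha))).trans_lt har,
    hbr.trans (Fin.le_def.1 (K.le_max' b hb))⟩

lemma exists_countLT_ge_card_sdiff_le {I K : Finset (Fin n)} (hI : #I = k) (hK : #K = k)
    {s : ℕ} (h : ∀ r, countLT I r ≤ countLT K r + s) :
    ∃ L, #L = k ∧ (∀ r, countLT I r ≤ countLT L r) ∧ #(L \ K) ≤ s := by
  induction s generalizing K with
  | zero => exact ⟨K, hK, h, by simp⟩
  | succ s ih =>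
    by_cases hs : ∀ r, countLT I r ≤ countLT K r + s
    · obtain ⟨L, hL, hIL, hLK⟩ := ih hK hs
      exact ⟨L, hL, hIL, hLK.trans s.le_succ⟩
    obtain ⟨r₀, hr₀⟩ := not_forall.1 hs
    obtain ⟨a, haK, b, hbK, hab⟩ :=
      exists_exchange_of_countLT_lt (hI.trans hK.symm).le (r₀ := r₀) (by omega)
    have hab₀ := hab r₀ (by omega)
    have haK' : a ∉ K.erase b := fun ha => haK (mem_of_mem_erase ha)
    have hK' : #(insert a (K.erase b)) = k := by
      rw [card_insert_of_notMem haK', card_erase_add_one hbK, hK]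
    have hIK' : ∀ r, countLT I r ≤ countLT (insert a (K.erase b)) r + s := by
      intro r
      have e₁ := countLT_insert haK' r
      have e₂ := countLT_erase_add hbK r
      have := h r
      rcases lt_or_ge (countLT K r) (countLT I r) with hr | hr
      · obtain ⟨har, hbr⟩ := hab r hr
        split_ifs at e₁ e₂ <;> omega
      · split_ifs at e₁ e₂ <;> omega
    obtain ⟨L, hL, hIL, hLK'⟩ := ih hK' hIK'
    refine ⟨L, hL, hIL, ?_⟩
    calc #(L \ K) ≤ #(insert a (L \ insert a (K.erase b))) := by
          refine card_le_card fun x hx => ?_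
          simp only [mem_sdiff, mem_insert, mem_erase] at hx ⊢
          tauto
      _ ≤ s + 1 := (card_insert_le _ _).trans (by omega)

end

theorem stmt_17_general (n k : ℕ) (s : ℕ)
    (I K : Finset (Fin n)) (hI : I.card = k) (hK : K.card = k) :
    distToSet k K {L : Finset (Fin n) | galeLE n k L I} ≤ s ↔
    ∀ r : ℕ, r ≤ n →
      ((I.filter fun m : Fin n => (m : ℕ) < r).card : ℤ) -
        ((K.filter fun m : Fin n => (m : ℕ) < r).card : ℤ) ≤ (s : ℤ) := by
  rw [distToSet_le_iff ⟨I, (galeLE_iff_countLT hI).2 ⟨hI, fun _ => le_rfl⟩⟩]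
  change _ ↔ ∀ r, r ≤ n → (countLT I r : ℤ) - countLT K r ≤ s
  constructor
  · rintro ⟨L, hLI, hLK⟩ r -
    obtain ⟨hL, hIL⟩ := (galeLE_iff_countLT hI).1 hLI
    rw [distKL_eq_card_sdiff hL] at hLK
    have := (hIL r).trans (countLT_le_countLT_add_card_sdiff K L r)
    omega
  · intro h
    have h' : ∀ r, countLT I r ≤ countLT K r + s := fun r => by
      rcases le_or_gt r n with hr | hr
      · have := h r hr
        omega
      · rw [countLT_of_le I hr.le, countLT_of_le K hr.le, hI, hK]
        omega
    obtain ⟨L, hL, hIL, hLK⟩ := exists_countLT_ge_card_sdiff_le hI hK h'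
    exact ⟨L, (galeLE_iff_countLT hI).2 ⟨hL, hIL⟩, (distKL_eq_card_sdiff hL).trans_le hLK⟩

theorem stmt_17 (n k : ℕ) (hk : k ≤ n) (s : ℕ)
    (I K : Finset (Fin n)) (hI : I.card = k) (hK : K.card = k) :
    distToSet k K {L : Finset (Fin n) | galeLE n k L I} ≤ s ↔
    ∀ r : ℕ, r ≤ n →
      ((I.filter fun m : Fin n => (m : ℕ) < r).card : ℤ) -
        ((K.filter fun m : Fin n => (m : ℕ) < r).card : ℤ) ≤ (s : ℤ) :=
  stmt_17_general n k s I K hI hK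
end

section
/- Let I, J, K ∈ binom([n],k) and let d ≥ 0 be an integer. Then K ∈ T(I,J,d) if and only if I[1,r) − K[1,r) + K[1,s) − J[1,s) ≤ d for all integers 1 ≤ r, s ≤ n+1, where X[1,r) denotes |X ∩ {1,…,r−1}|. -/
/-!
Write `countLt X r` for the number of elements of `X` below `r`. The Gale order reads
`L ≤ I ↔ ∀ r, countLt I r ≤ countLt L r`, and the theorem is the sum of the two formulas
`dist(K, B(I)) = max_r (countLt I r - countLt K r)` and
`dist(K, A(J)) = max_s (countLt K s - countLt J s)`.
Lower bound: replacing `K` by `L` moves every `countLt · r` by at most `dist(K, L)`.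
Upper bound: exchanging the largest element of `K` for a missing element below the first cut of
maximal deficit lowers that maximum by one. The reversal `i ↦ n - 1 - i` exchanges `A(J)` with
`B(rev J)`.
-/

lemma Nat.exists_add_le_of_forall_le_iff {ι : Type*} {a : ℕ} {f g : ι → ℕ} {i₀ : ι}
    (h₀ : g i₀ ≤ f i₀) (h : ∀ m, a ≤ m ↔ ∀ i, f i ≤ g i + m) : ∃ i, g i + a ≤ f i := by
  rcases a with _ | a
  · exact ⟨i₀, h₀⟩
  obtain ⟨i, hi⟩ := not_forall.1 ((h a).not.1 (by omega))
  exact ⟨i, by omega⟩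

namespace Gale

open Finset

variable {n k : ℕ}

def countLt (X : Finset (Fin n)) (r : ℕ) : ℕ :=
  (X.filter fun m : Fin n => (m : ℕ) < r).card

lemma countLt_zero (X : Finset (Fin n)) : countLt X 0 = 0 := by simp [countLt]

lemma countLt_le_card (X : Finset (Fin n)) (r : ℕ) : countLt X r ≤ X.card :=
  card_filter_le _ _

lemma countLt_eq_card {X : Finset (Fin n)} {r : ℕ} (h : ∀ x ∈ X, (x : ℕ) < r) :
    countLt X r = X.card := by
  rw [countLt, filter_true_of_mem h]

lemma countLt_of_le {r : ℕ} (X : Finset (Fin n)) (h : n ≤ r) : countLt X r = X.card :=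
  countLt_eq_card fun x _ => x.isLt.trans_le h

lemma countLt_min (X : Finset (Fin n)) (r : ℕ) : countLt X (min r n) = countLt X r := by
  rcases le_total r n with h | h
  · rw [min_eq_left h]
  · rw [min_eq_right h, countLt_of_le X le_rfl, countLt_of_le X h]

lemma exists_notMem_lt_of_countLt_lt {I K : Finset (Fin n)} {r : ℕ}
    (h : countLt K r < countLt I r) : ∃ p ∉ K, (p : ℕ) < r := by
  by_contra! hK
  refine h.not_ge (card_le_card fun x hx => ?_)
  simp only [mem_filter] at hx ⊢
  exact ⟨not_not.1 fun hxK => (hK x hxK).not_gt hx.2, hx.2⟩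

lemma exists_mem_le_of_countLt_lt_card {K : Finset (Fin n)} {r : ℕ}
    (h : countLt K r < K.card) : ∃ q ∈ K, r ≤ (q : ℕ) := by
  by_contra! hK
  exact h.ne (countLt_eq_card hK)

lemma countLt_insert {X : Finset (Fin n)} {p : Fin n} (hp : p ∉ X) (r : ℕ) :
    countLt (insert p X) r = countLt X r + if (p : ℕ) < r then 1 else 0 := by
  unfold countLt
  rw [filter_insert]
  split_ifs
  · exact card_insert_of_notMem fun h => hp (mem_filter.1 h).1
  · rfl

lemma countLt_erase {X : Finset (Fin n)} {q : Fin n} (hq : q ∈ X) (r : ℕ) :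
    countLt (X.erase q) r = countLt X r - if (q : ℕ) < r then 1 else 0 := by
  unfold countLt
  rw [filter_erase]
  split_ifs with h
  · exact card_erase_of_mem (mem_filter.2 ⟨hq, h⟩)
  · rw [erase_eq_of_notMem (a := q) fun hq' => h (mem_filter.1 hq').2, Nat.sub_zero]

lemma orderEmbOfFin_lt_iff (X : Finset (Fin n)) (hX : X.card = k) (t : Fin k) (r : ℕ) :
    (X.orderEmbOfFin hX t : ℕ) < r ↔ (t : ℕ) < countLt X r := by
  constructor
  · intro ht
    have hsub : (Iic t).map (X.orderEmbOfFin hX).toEmbedding ⊆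
        X.filter fun m : Fin n => (m : ℕ) < r := by
      simp only [subset_iff, mem_map, mem_Iic, mem_filter]
      rintro _ ⟨s, hs, rfl⟩
      exact ⟨X.orderEmbOfFin_mem hX s,
        lt_of_le_of_lt (Fin.le_def.1 ((X.orderEmbOfFin hX).monotone hs)) ht⟩
    have := card_le_card hsub
    rw [card_map, Fin.card_Iic] at this
    exact this
  · intro ht
    by_contra! hrt
    have hsub : (X.filter fun m : Fin n => (m : ℕ) < r) ⊆
        (Iio t).map (X.orderEmbOfFin hX).toEmbedding := by
      intro x hx
      rw [mem_filter] at hx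
      obtain ⟨s, rfl⟩ : x ∈ Set.range (X.orderEmbOfFin hX) := by
        rw [range_orderEmbOfFin]; exact hx.1
      refine mem_map_of_mem _ (mem_Iio.2 ((X.orderEmbOfFin hX).lt_iff_lt.1 ?_))
      exact Fin.lt_def.2 (hx.2.trans_le hrt)
    have := card_le_card hsub
    rw [card_map, Fin.card_Iio] at this
    exact this.not_gt ht

lemma galeLE_iff_forall_countLt_le {L I : Finset (Fin n)} (hL : L.card = k) (hI : I.card = k) :
    galeLE n k L I ↔ ∀ r, countLt I r ≤ countLt L r := by
  refine ⟨fun ⟨hL, hI, hLI⟩ r => ?_, fun h => ⟨hL, hI, fun t => ?_⟩⟩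
  · by_contra! hr
    have hk : countLt L r < k := hr.trans_le (hI ▸ countLt_le_card I r)
    have hLI := Fin.le_def.1 (hLI ⟨countLt L r, hk⟩)
    rw [coe_orderIsoOfFin_apply, coe_orderIsoOfFin_apply] at hLI
    have hIt := (orderEmbOfFin_lt_iff I hI ⟨countLt L r, hk⟩ r).2 hr
    have hLt := (orderEmbOfFin_lt_iff L hL ⟨countLt L r, hk⟩ r).not.2 (lt_irrefl _)
    omega
  · rw [Fin.le_def, coe_orderIsoOfFin_apply, coe_orderIsoOfFin_apply, ← Nat.lt_succ_iff,
      orderEmbOfFin_lt_iff]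
    exact ((orderEmbOfFin_lt_iff I hI t _).1 (Nat.lt_succ_self _)).trans_le (h _)

/-- The witness is `insert p (K.erase q)`, with `p ∉ K` below the first cut violating slack `m`
and `q` the largest element of `K`. -/
lemma exists_exchange {I K : Finset (Fin n)} (hI : I.card = k) (hK : K.card = k) {m : ℕ}
    (h : ∀ r, countLt I r ≤ countLt K r + (m + 1)) :
    ∃ K', K'.card = k ∧ (K' \ K).card ≤ 1 ∧ ∀ r, countLt I r ≤ countLt K' r + m := by
  by_cases hm : ∀ r, countLt I r ≤ countLt K r + m
  · exact ⟨K, hK, by simp, hm⟩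
  simp only [not_forall, not_le] at hm
  have hr₀ : countLt K (Nat.find hm) + m < countLt I (Nat.find hm) := Nat.find_spec hm
  have hbelow : ∀ r < Nat.find hm, countLt I r ≤ countLt K r + m :=
    fun r hr => not_lt.1 (Nat.find_min hm hr)
  obtain ⟨p, hpK, hpr⟩ := exists_notMem_lt_of_countLt_lt
    (show countLt K (Nat.find hm) < countLt I (Nat.find hm) by omega)
  obtain ⟨x, hxK, hrx⟩ := exists_mem_le_of_countLt_lt_card
    (show countLt K (Nat.find hm) < K.card by have := countLt_le_card I (Nat.find hm); omega)
  set q := K.max' ⟨x, hxK⟩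
  have hqK : q ∈ K := K.max'_mem _
  have hpq : (p : ℕ) < q := hpr.trans_le (hrx.trans (Fin.le_def.1 (K.le_max' x hxK)))
  have hpK' : p ∉ K.erase q := fun h => hpK (mem_of_mem_erase h)
  refine ⟨insert p (K.erase q), ?_, ?_, fun r => ?_⟩
  · rw [card_insert_of_notMem hpK', card_erase_of_mem hqK]
    have := card_pos.2 ⟨x, hxK⟩
    omega
  · refine (card_le_card fun y hy => ?_).trans (card_singleton p).le
    rw [mem_sdiff, mem_insert, mem_erase] at hy
    rw [mem_singleton]
    tauto
  · rw [countLt_insert hpK', countLt_erase hqK]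
    rcases lt_or_ge (q : ℕ) r with hqr | hrq
    · have hKr : countLt K r = K.card := countLt_eq_card fun y hy =>
        (Fin.le_def.1 (K.le_max' y hy)).trans_lt hqr
      have := countLt_le_card I r
      have := card_pos.2 ⟨x, hxK⟩
      simp only [hqr, hpq.trans hqr, if_true]
      omega
    · rcases lt_or_ge (p : ℕ) r with hpr' | hrp
      · simp only [hpr', hrq.not_gt, if_true, if_false]
        have := h r
        omega
      · simp only [hrp.not_gt, (hrp.trans hpq.le).not_gt, if_false]
        have := hbelow r (by omega)
        omega

lemma countLt_le_add_distKL {K L : Finset (Fin n)} (hL : L.card = k) (r : ℕ) :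
    countLt L r ≤ countLt K r + distKL k K L := by
  have hsub : (L.filter fun m : Fin n => (m : ℕ) < r) ⊆
      (K.filter fun m : Fin n => (m : ℕ) < r) ∪ (L \ K) := by
    intro x hx
    rw [mem_filter] at hx
    by_cases hxK : x ∈ K
    · exact mem_union_left _ (mem_filter.2 ⟨hxK, hx.2⟩)
    · exact mem_union_right _ (mem_sdiff.2 ⟨hx.1, hxK⟩)
  have := (card_le_card hsub).trans (card_union_le _ _)
  rw [card_sdiff, hL] at this
  exact this

lemma distKL_le_add (k : ℕ) (K K' L : Finset (Fin n)) :
    distKL k K L ≤ distKL k K' L + (K' \ K).card := by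
  have hsub : K' ∩ L ⊆ (K ∩ L) ∪ (K' \ K) := by
    intro x hx
    rw [mem_inter] at hx
    by_cases hxK : x ∈ K
    · exact mem_union_left _ (mem_inter.2 ⟨hxK, hx.2⟩)
    · exact mem_union_right _ (mem_sdiff.2 ⟨hx.1, hxK⟩)
  have := (card_le_card hsub).trans (card_union_le _ _)
  unfold distKL
  omega

lemma distToSet_le_add (k : ℕ) (K K' : Finset (Fin n)) (ℬ : Set (Finset (Fin n))) :
    distToSet k K ℬ ≤ distToSet k K' ℬ + (K' \ K).card := by
  rcases ℬ.eq_empty_or_nonempty with rfl | ⟨L₀, hL₀⟩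
  · simp [distToSet]
  obtain ⟨L, hL, hLK'⟩ := Nat.sInf_mem (⟨_, L₀, hL₀, rfl⟩ : (distKL k K' '' ℬ).Nonempty)
  calc distToSet k K ℬ ≤ distKL k K L := Nat.sInf_le ⟨L, hL, rfl⟩
    _ ≤ distKL k K' L + (K' \ K).card := distKL_le_add k K K' L
    _ = distToSet k K' ℬ + (K' \ K).card := by rw [hLK']; rfl

lemma distToSet_lowerGale_le_iff {I K : Finset (Fin n)} (hI : I.card = k) (hK : K.card = k)
    (m : ℕ) : distToSet k K {L | galeLE n k L I} ≤ m ↔ ∀ r, countLt I r ≤ countLt K r + m := by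
  constructor
  · intro hm r
    obtain ⟨L, hLI, hLK⟩ := Nat.sInf_mem
      (⟨_, I, ⟨hI, hI, fun _ => le_rfl⟩, rfl⟩ : (distKL k K '' {L | galeLE n k L I}).Nonempty)
    have hL : L.card = k := hLI.1
    have := countLt_le_add_distKL (K := K) hL r
    have := (galeLE_iff_forall_countLt_le hL hI).1 hLI r
    have : distKL k K L ≤ m := hLK ▸ hm
    omega
  · induction m generalizing K with
    | zero =>
      intro h
      have hKI : K ∈ {L | galeLE n k L I} := (galeLE_iff_forall_countLt_le hK hI).2 h
      refine (Nat.sInf_le (Set.mem_image_of_mem (distKL k K) hKI)).trans ?_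
      simp [distKL, hK]
    | succ m ih =>
      intro h
      obtain ⟨K', hK', hK'K, hm⟩ := exists_exchange hI hK h
      exact (distToSet_le_add k K K' _).trans (Nat.add_le_add (ih hK' hm) hK'K)

def rev (X : Finset (Fin n)) : Finset (Fin n) :=
  X.map Fin.revPerm.toEmbedding

lemma rev_rev (X : Finset (Fin n)) : rev (rev X) = X := by
  ext x
  simp [rev]

lemma card_rev (X : Finset (Fin n)) : (rev X).card = X.card := card_map _

lemma distKL_rev (k : ℕ) (K L : Finset (Fin n)) : distKL k (rev K) (rev L) = distKL k K L := by
  rw [distKL, distKL, rev, rev, ← map_inter, card_map]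

lemma countLt_rev (X : Finset (Fin n)) (r : ℕ) :
    countLt (rev X) r = X.card - countLt X (n - r) := by
  have hrev : X.filter (fun x : Fin n => (Fin.rev x : ℕ) < r) =
      X.filter fun x : Fin n => ¬ (x : ℕ) < n - r :=
    filter_congr fun x _ => by simp only [Fin.val_rev]; omega
  have := card_filter_add_card_filter_not (s := X) (p := fun x : Fin n => (x : ℕ) < n - r)
  rw [countLt, rev, filter_map, card_map]
  simp only [Function.comp_def, Equiv.coe_toEmbedding, Fin.revPerm_apply, hrev]
  unfold countLt
  omega

lemma forall_countLt_rev_le_iff {X Y : Finset (Fin n)} (hX : X.card = k) (hY : Y.card = k)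
    (m : ℕ) : (∀ r, countLt (rev X) r ≤ countLt (rev Y) r + m) ↔
      ∀ s, countLt Y s ≤ countLt X s + m := by
  constructor
  · intro h s
    have hs := h (n - min s n)
    rw [countLt_rev, countLt_rev, Nat.sub_sub_self (min_le_right s n), countLt_min,
      countLt_min] at hs
    have := countLt_le_card X s
    have := countLt_le_card Y s
    omega
  · intro h r
    have := h (n - r)
    have := countLt_le_card X (n - r)
    have := countLt_le_card Y (n - r)
    rw [countLt_rev, countLt_rev]
    omega

lemma galeLE_rev_iff {J L : Finset (Fin n)} :
    galeLE n k (rev L) (rev J) ↔ galeLE n k J L := by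
  suffices h : ∀ {J L : Finset (Fin n)}, J.card = k → L.card = k →
      (galeLE n k (rev L) (rev J) ↔ galeLE n k J L) by
    refine ⟨fun hLJ => ?_, fun hJL => (h hJL.1 hJL.2.1).2 hJL⟩
    exact (h (card_rev J ▸ hLJ.2.1) (card_rev L ▸ hLJ.1)).1 hLJ
  intro J L hJ hL
  rw [galeLE_iff_forall_countLt_le ((card_rev L).trans hL) ((card_rev J).trans hJ),
    galeLE_iff_forall_countLt_le hJ hL]
  simpa only [Nat.add_zero] using forall_countLt_rev_le_iff hJ hL 0

lemma distToSet_upperGale_eq_rev (J K : Finset (Fin n)) :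
    distToSet k K {L | galeLE n k J L} = distToSet k (rev K) {L | galeLE n k L (rev J)} := by
  have hset : {L | galeLE n k L (rev J)} = rev '' {L | galeLE n k J L} := by
    ext L
    refine ⟨fun hL => ⟨rev L, ?_, rev_rev L⟩, ?_⟩
    · rw [Set.mem_ofPred_eq, ← galeLE_rev_iff, rev_rev]
      exact hL
    · rintro ⟨L, hL, rfl⟩
      exact galeLE_rev_iff.2 hL
  rw [distToSet, distToSet, hset, Set.image_image]
  simp only [distKL_rev]

lemma distToSet_upperGale_le_iff {J K : Finset (Fin n)} (hJ : J.card = k) (hK : K.card = k)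
    (m : ℕ) : distToSet k K {L | galeLE n k J L} ≤ m ↔ ∀ s, countLt K s ≤ countLt J s + m := by
  rw [distToSet_upperGale_eq_rev, distToSet_lowerGale_le_iff ((card_rev J).trans hJ)
    ((card_rev K).trans hK), forall_countLt_rev_le_iff hJ hK]

end Gale

open Gale

theorem stmt_18_general (n k : ℕ) (d : ℕ)
    (I J K : Finset (Fin n)) (hI : I.card = k) (hJ : J.card = k) (hK : K.card = k) :
    -- K ∈ T(I,J,d) : dist(K, B(I)) + dist(K, A(J)) ≤ d
    (distToSet k K {L : Finset (Fin n) | galeLE n k L I} +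
      distToSet k K {L : Finset (Fin n) | galeLE n k J L} ≤ d) ↔
    ∀ r s : ℕ, r ≤ n → s ≤ n →
      (((I.filter fun m : Fin n => (m : ℕ) < r).card : ℤ) -
        ((K.filter fun m : Fin n => (m : ℕ) < r).card : ℤ)) +
      (((K.filter fun m : Fin n => (m : ℕ) < s).card : ℤ) -
        ((J.filter fun m : Fin n => (m : ℕ) < s).card : ℤ)) ≤ (d : ℤ) := by
  have hB := distToSet_lowerGale_le_iff hI hK
  have hA := distToSet_upperGale_le_iff hJ hK
  constructor
  · intro h r s _ _
    have hr := (hB _).1 le_rfl r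
    have hs := (hA _).1 le_rfl s
    unfold countLt at hr hs
    omega
  · intro h
    obtain ⟨r, hr⟩ := Nat.exists_add_le_of_forall_le_iff (i₀ := 0) (by simp [countLt_zero]) hB
    obtain ⟨s, hs⟩ := Nat.exists_add_le_of_forall_le_iff (i₀ := 0) (by simp [countLt_zero]) hA
    have hrs : (countLt I (min r n) : ℤ) - countLt K (min r n) +
        (countLt K (min s n) - countLt J (min s n)) ≤ d :=
      h _ _ (min_le_right r n) (min_le_right s n)
    simp only [countLt_min] at hrs
    omega

theorem stmt_18 (n k : ℕ) (hk : k ≤ n) (d : ℕ)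
    (I J K : Finset (Fin n)) (hI : I.card = k) (hJ : J.card = k) (hK : K.card = k) :
    -- K ∈ T(I,J,d) : dist(K, B(I)) + dist(K, A(J)) ≤ d
    (distToSet k K {L : Finset (Fin n) | galeLE n k L I} +
      distToSet k K {L : Finset (Fin n) | galeLE n k J L} ≤ d) ↔
    ∀ r s : ℕ, r ≤ n → s ≤ n →
      (((I.filter fun m : Fin n => (m : ℕ) < r).card : ℤ) -
        ((K.filter fun m : Fin n => (m : ℕ) < r).card : ℤ)) +
      (((K.filter fun m : Fin n => (m : ℕ) < s).card : ℤ) -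
        ((J.filter fun m : Fin n => (m : ℕ) < s).card : ℤ)) ≤ (d : ℤ) :=
  stmt_18_general n k d I J K hI hJ hK
end
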